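/- arXiv:2307.12756 — 2 statements merged into one kernel-verified Lean document; each statement's English description precedes it below -/
import Mathlib

section
/- Unbiasedness of the label-corrected loss (Theorem 1, general measure-theoretic form). Let (Ω, F, μ) be a probability space, let 𝒳 be a measurable space, let X : Ω → 𝒳 be measurable (the feature map), let E : Ω → ℝ be measurable (the elapsed time), and let V, C : Ω → ℝ be measurable functions taking values in {0,1} with V ≤ C pointwise. Let m be the sub-σ-algebra of F generated by the pair map ω ↦ (X ω, E ω). Suppose W : Ω → ℝ is m-measurable, takes values in [0,1], and satisfies W · μ[(1 - V) | m] = μ[C · (1 - V) | m] almost everywhere with respect to μ (i.e., W is an ideal label-correction model: W = P(C = 1 | X, E, V = 0) on {V = 0}). Then for all bounded measurable functions a, b : 𝒳 → ℝ, ∫ (V · a(X) + W · (1 - V) · a(X) + (1 - W) · (1 - V) · b(X)) dμ = ∫ (C · a(X) + (1 - C) · b(X)) dμ. -/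
/-!
With the corrected label `Ŵ = V + W (1 - V)`, the label-corrected loss is exactly the oracle
loss with `C` replaced by `Ŵ`. Both losses are affine in the label, with coefficients that are
functions of `X`, hence `m`-measurable, so their expectations only see the conditional
expectation of the label given `m`. Pulling the `m`-measurable `W` out of the conditional
expectation and using `C V = V`, the ideal-model condition gives `μ[Ŵ | m] = μ[C | m]`.
-/

open MeasureTheory Filter

theorem abs_le_one_of_eq_zero_or_one {x : ℝ} (hx : x = 0 ∨ x = 1) : |x| ≤ 1 := by
  rcases hx with rfl | rfl <;> norm_num

theorem mul_eq_right_of_le_of_eq_zero_or_one {v c : ℝ} (hv : v = 0 ∨ v = 1)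
    (hc : c = 0 ∨ c = 1) (hvc : v ≤ c) : c * v = v := by
  rcases hv with rfl | rfl
  · exact mul_zero c
  · rcases hc with rfl | rfl
    · norm_num at hvc
    · exact one_mul 1

section

variable {Ω : Type*} {m m₀ : MeasurableSpace Ω} {μ : Measure Ω}

theorem integral_mul_condExp_of_stronglyMeasurable (hm : m ≤ m₀) [SigmaFinite (μ.trim hm)]
    {φ Y : Ω → ℝ} (hφ : StronglyMeasurable[m] φ) (hφY : Integrable (φ * Y) μ)
    (hY : Integrable Y μ) :
    ∫ ω, φ ω * μ[Y | m] ω ∂μ = ∫ ω, φ ω * Y ω ∂μ :=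
  calc ∫ ω, φ ω * μ[Y | m] ω ∂μ = ∫ ω, μ[φ * Y | m] ω ∂μ :=
        integral_congr_ae (condExp_mul_of_stronglyMeasurable_left hφ hφY hY).symm
    _ = ∫ ω, φ ω * Y ω ∂μ := integral_condExp hm

variable [IsFiniteMeasure μ]

theorem integral_affine_eq_integral_condExp (hm : m ≤ m₀) {f g Y : Ω → ℝ}
    (hf : StronglyMeasurable[m] f) (hg : StronglyMeasurable[m] g) {Mf Mg : ℝ}
    (hMf : ∀ ω, |f ω| ≤ Mf) (hMg : ∀ ω, |g ω| ≤ Mg) (hY : Integrable Y μ) :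
    ∫ ω, (Y ω * f ω + (1 - Y ω) * g ω) ∂μ
      = ∫ ω, g ω ∂μ + ∫ ω, (f ω - g ω) * μ[Y | m] ω ∂μ := by
  have hfg : StronglyMeasurable[m] (f - g) := hf.sub hg
  have hg_int : Integrable g μ :=
    .of_bound (hg.mono hm).aestronglyMeasurable Mg (ae_of_all _ hMg)
  have hfgY : Integrable ((f - g) * Y) μ :=
    hY.bdd_mul (c := Mf + Mg) (hfg.mono hm).aestronglyMeasurable
      (ae_of_all _ fun ω => (abs_sub _ _).trans (add_le_add (hMf ω) (hMg ω)))
  calc ∫ ω, (Y ω * f ω + (1 - Y ω) * g ω) ∂μ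
      = ∫ ω, (g ω + (f ω - g ω) * Y ω) ∂μ := by
        congr 1; ext ω; ring
    _ = ∫ ω, g ω ∂μ + ∫ ω, (f ω - g ω) * Y ω ∂μ := integral_add hg_int hfgY
    _ = ∫ ω, g ω ∂μ + ∫ ω, (f ω - g ω) * μ[Y | m] ω ∂μ :=
        congrArg _ (integral_mul_condExp_of_stronglyMeasurable hm hfg hfgY hY).symm

theorem integral_affine_congr_condExp (hm : m ≤ m₀) {f g Y₁ Y₂ : Ω → ℝ}
    (hf : StronglyMeasurable[m] f) (hg : StronglyMeasurable[m] g) {Mf Mg : ℝ}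
    (hMf : ∀ ω, |f ω| ≤ Mf) (hMg : ∀ ω, |g ω| ≤ Mg)
    (hY₁ : Integrable Y₁ μ) (hY₂ : Integrable Y₂ μ)
    (hY : μ[Y₁ | m] =ᵐ[μ] μ[Y₂ | m]) :
    ∫ ω, (Y₁ ω * f ω + (1 - Y₁ ω) * g ω) ∂μ
      = ∫ ω, (Y₂ ω * f ω + (1 - Y₂ ω) * g ω) ∂μ := by
  rw [integral_affine_eq_integral_condExp hm hf hg hMf hMg hY₁,
    integral_affine_eq_integral_condExp hm hf hg hMf hMg hY₂]
  exact congrArg _ (integral_congr_ae (hY.mono fun ω hω => congrArg ((f ω - g ω) * ·) hω))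

theorem condExp_corrected_label_ae_eq {V C W : Ω → ℝ} (hCV : ∀ ω, C ω * V ω = V ω)
    (hV : Integrable V μ) (hC : Integrable C μ) (hW : StronglyMeasurable[m] W)
    (hWV : Integrable (W * fun ω => 1 - V ω) μ)
    (hWideal : W * μ[(fun ω => 1 - V ω) | m] =ᵐ[μ] μ[(fun ω => C ω * (1 - V ω)) | m]) :
    μ[(fun ω => V ω + W ω * (1 - V ω)) | m] =ᵐ[μ] μ[C | m] := by
  have hC_sub_V : (fun ω => C ω * (1 - V ω)) = C - V := by
    ext ω; simp only [Pi.sub_apply, mul_one_sub, hCV]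
  calc μ[V + W * fun ω => 1 - V ω | m]
      =ᵐ[μ] μ[V | m] + μ[W * fun ω => 1 - V ω | m] := condExp_add hV hWV m
    _ =ᵐ[μ] μ[V | m] + W * μ[(fun ω => 1 - V ω) | m] :=
        .add .rfl (condExp_mul_of_stronglyMeasurable_left hW hWV ((integrable_const 1).sub hV))
    _ =ᵐ[μ] μ[V | m] + μ[C - V | m] := .add .rfl (hC_sub_V ▸ hWideal)
    _ =ᵐ[μ] μ[V + (C - V) | m] := (condExp_add hV (hC.sub hV) m).symm
    _ = μ[C | m] := by rw [add_sub_cancel]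

end

/-- Unbiasedness of the label-corrected loss (Theorem 1, general
measure-theoretic form). -/
theorem unbiased_label_corrected_loss
    {Ω : Type*} [MeasurableSpace Ω] {𝒳 : Type*} [MeasurableSpace 𝒳]
    (μ : Measure Ω) [IsProbabilityMeasure μ]
    (X : Ω → 𝒳) (E : Ω → ℝ) (V C W : Ω → ℝ)
    (hX : Measurable X) (hE : Measurable E)
    (hV : Measurable V) (hC : Measurable C)
    (hV01 : ∀ ω, V ω = 0 ∨ V ω = 1)
    (hC01 : ∀ ω, C ω = 0 ∨ C ω = 1)
    (hVC : ∀ ω, V ω ≤ C ω)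
    (m : MeasurableSpace Ω)
    (hm : m = MeasurableSpace.comap (fun ω => (X ω, E ω)) inferInstance)
    (hWm : Measurable[m] W)
    (hW01 : ∀ ω, W ω ∈ Set.Icc (0 : ℝ) 1)
    (hWideal : W * μ[(fun ω => 1 - V ω) | m] =ᵐ[μ] μ[(fun ω => C ω * (1 - V ω)) | m]) :
    ∀ a b : 𝒳 → ℝ, Measurable a → Measurable b →
      (∃ Ma, ∀ x, |a x| ≤ Ma) → (∃ Mb, ∀ x, |b x| ≤ Mb) →
      ∫ ω, (V ω * a (X ω) + W ω * (1 - V ω) * a (X ω)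
            + (1 - W ω) * (1 - V ω) * b (X ω)) ∂μ
        = ∫ ω, (C ω * a (X ω) + (1 - C ω) * b (X ω)) ∂μ := by
  rintro a b ha hb ⟨Ma, hMa⟩ ⟨Mb, hMb⟩
  have hle := (hX.prodMk hE).comap_le
  rw [← hm] at hle
  have hXm : Measurable[m] X := by
    rw [hm]; exact measurable_fst.comp (comap_measurable _)
  have hV_int : Integrable V μ := .of_bound hV.aestronglyMeasurable 1
    (ae_of_all _ fun ω => abs_le_one_of_eq_zero_or_one (hV01 ω))
  have hC_int : Integrable C μ := .of_bound hC.aestronglyMeasurable 1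
    (ae_of_all _ fun ω => abs_le_one_of_eq_zero_or_one (hC01 ω))
  have hWV_int : Integrable (W * fun ω => 1 - V ω) μ :=
    ((integrable_const 1).sub hV_int).bdd_mul (c := 1)
      (hWm.stronglyMeasurable.mono hle).aestronglyMeasurable
      (ae_of_all _ fun ω => abs_le.2 ⟨by linarith [(hW01 ω).1], (hW01 ω).2⟩)
  have hcond := condExp_corrected_label_ae_eq
    (fun ω => mul_eq_right_of_le_of_eq_zero_or_one (hV01 ω) (hC01 ω) (hVC ω))
    hV_int hC_int hWm.stronglyMeasurable hWV_int hWideal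
  calc ∫ ω, (V ω * a (X ω) + W ω * (1 - V ω) * a (X ω)
          + (1 - W ω) * (1 - V ω) * b (X ω)) ∂μ
      = ∫ ω, ((V ω + W ω * (1 - V ω)) * a (X ω)
          + (1 - (V ω + W ω * (1 - V ω))) * b (X ω)) ∂μ := by
        congr 1; ext ω; ring
    _ = ∫ ω, (C ω * a (X ω) + (1 - C ω) * b (X ω)) ∂μ :=
        integral_affine_congr_condExp hle (ha.comp hXm).stronglyMeasurable
          (hb.comp hXm).stronglyMeasurable (fun ω => hMa (X ω)) (fun ω => hMb (X ω))
          (hV_int.add hWV_int) hC_int hcond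
end

section
/- Unbiasedness of the label-corrected loss (Theorem 1, discrete distribution form). Let α and β be finite types (the feature space and the elapsed-time space), and let p be a probability mass function on α × β × Bool × Bool, where a tuple (x, e, v, c) records features, elapsed time, observed conversion label, and true conversion label. Assume p is supported on tuples with v ≤ c, i.e., p(x, e, true, false) = 0 for all x, e. Define w : α × β → ℝ by w(x, e) = p(x, e, false, true) / (p(x, e, false, true) + p(x, e, false, false)) whenever p(x, e, false, true) + p(x, e, false, false) > 0, and w(x, e) = 0 otherwise. Then for all functions a, b : α → ℝ: Σ_{(x,e,v,c)} p(x,e,v,c) · ([v = true]·a(x) + w(x,e)·[v = false]·a(x) + (1 − w(x,e))·[v = false]·b(x)) = Σ_{(x,e,v,c)} p(x,e,v,c) · ([c = true]·a(x) + [c = false]·b(x)), where [·] denotes the 0/1 indicator. -/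
/-- Unbiasedness of the label-corrected loss (Theorem 1, discrete
distribution form).  A tuple `(x, e, v, c)` records features, elapsed
time, observed conversion label, and true conversion label. -/
theorem unbiased_label_corrected_loss_discrete
    {α β : Type*} [Fintype α] [Fintype β]
    (p : α × β × Bool × Bool → ℝ)
    (hp0 : ∀ t, 0 ≤ p t)
    (hp1 : ∑ t, p t = 1)
    (hsupp : ∀ x e, p (x, e, true, false) = 0)
    (w : α × β → ℝ)
    (hw : ∀ x e, w (x, e) =
      if 0 < p (x, e, false, true) + p (x, e, false, false)
      then p (x, e, false, true) / (p (x, e, false, true) + p (x, e, false, false))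
      else 0) :
    ∀ a b : α → ℝ,
      ∑ t : α × β × Bool × Bool, p t *
          ((if t.2.2.1 = true then (1 : ℝ) else 0) * a t.1
            + w (t.1, t.2.1) * (if t.2.2.1 = false then (1 : ℝ) else 0) * a t.1
            + (1 - w (t.1, t.2.1)) * (if t.2.2.1 = false then (1 : ℝ) else 0) * b t.1)
        = ∑ t : α × β × Bool × Bool, p t *
            ((if t.2.2.2 = true then (1 : ℝ) else 0) * a t.1
              + (if t.2.2.2 = false then (1 : ℝ) else 0) * b t.1) := by
  intro a b
  rw [Fintype.sum_prod_type, Fintype.sum_prod_type]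
  refine Finset.sum_congr rfl fun x _ => ?_
  rw [Fintype.sum_prod_type, Fintype.sum_prod_type]
  refine Finset.sum_congr rfl fun e _ => ?_
  have hs := hsupp x e
  have hw' := hw x e
  simp only [Fintype.sum_prod_type, Fintype.sum_bool]
  simp only [hs]
  by_cases hpos : 0 < p (x, e, false, true) + p (x, e, false, false)
  · rw [hw', if_pos hpos]
    have hne : p (x, e, false, true) + p (x, e, false, false) ≠ 0 := ne_of_gt hpos
    field_simp
    simp only [Bool.false_eq_true, Bool.true_eq_false, if_true, if_false]
    ring
  · have h1 : p (x, e, false, true) = 0 := by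
      have := hp0 (x, e, false, true); have := hp0 (x, e, false, false); linarith [not_lt.mp hpos]
    have h2 : p (x, e, false, false) = 0 := by
      have := hp0 (x, e, false, true); have := hp0 (x, e, false, false); linarith [not_lt.mp hpos]
    simp [h1, h2]
end
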